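/- arXiv:1008.4424 — 4 statements merged into one kernel-verified Lean document; each statement's English description precedes it below -/
import Mathlib

section
/- Let T be a finite tree with at least one edge. Then the 1-capture time of T equals ⌈diam(T)/2⌉. -/
/-!
Cops and Robber game on a simple graph `G` with `k` cops.
Convention (as in the paper): the cops first choose starting positions, then the
robber chooses a starting position; in every subsequent round the robber moves
first (staying or moving to an adjacent vertex) and then each cop moves
(staying or moving to an adjacent vertex).  The cops win as soon as some cop
occupies the robber's vertex.  Strategies have full information: a move may
depend on the round number and on all current positions.
-/

open SimpleGraph

universe u v w

/-- A full-information movement strategy for `k` cops on `G`: given the round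
number, the current cop positions and the robber's current position, each cop
stays or moves along an edge. -/
structure CopMoves {V : Type u} (G : SimpleGraph V) (k : ℕ) where
  move : ℕ → (Fin k → V) → V → (Fin k → V)
  valid : ∀ n c r i, move n c r i = c i ∨ G.Adj (c i) (move n c r i)

/-- A full-information movement strategy for the robber on `G` against `k` cops. -/
structure RobberMoves {V : Type u} (G : SimpleGraph V) (k : ℕ) where
  move : ℕ → (Fin k → V) → V → V
  valid : ∀ n c r, move n c r = r ∨ G.Adj r (move n c r)

/-- The positions (cops, robber) after `n` rounds, starting from the
configuration `(c0, r0)`; in each round the robber moves first, then the cops. -/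
def playFrom {V : Type u} {G : SimpleGraph V} {k : ℕ} (CM : CopMoves G k)
    (RM : RobberMoves G k) (c0 : Fin k → V) (r0 : V) : ℕ → (Fin k → V) × V
  | 0 => (c0, r0)
  | n + 1 =>
      let p := playFrom CM RM c0 r0 n
      let r' := RM.move n p.1 p.2
      (CM.move n p.1 r', r')

/-- The robber is captured within `t` rounds of the play from `(c0, r0)`. -/
def CapturedIn {V : Type u} {G : SimpleGraph V} {k : ℕ} (CM : CopMoves G k)
    (RM : RobberMoves G k) (c0 : Fin k → V) (r0 : V) (t : ℕ) : Prop :=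
  ∃ n ≤ t, ∃ i, (playFrom CM RM c0 r0 n).1 i = (playFrom CM RM c0 r0 n).2

/-- From the configuration `(c0, r0)`, robber to move, the `k` cops can
guarantee capture within `t` rounds. -/
def CopsWinFrom {V : Type u} (G : SimpleGraph V) (k : ℕ) (c0 : Fin k → V) (r0 : V)
    (t : ℕ) : Prop :=
  ∃ CM : CopMoves G k, ∀ RM : RobberMoves G k, CapturedIn CM RM c0 r0 t

/-- In the whole game (cops choose starting vertices, then the robber chooses a
starting vertex), `k` cops can guarantee capture within `t` rounds. -/
def CopsWinIn {V : Type u} (G : SimpleGraph V) (k t : ℕ) : Prop :=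
  ∃ c0 : Fin k → V, ∃ CM : CopMoves G k, ∀ r0 : V, ∀ RM : RobberMoves G k,
    CapturedIn CM RM c0 r0 t

/-- `G` is `k`-cop-win. -/
def IsCopWin {V : Type u} (G : SimpleGraph V) (k : ℕ) : Prop := ∃ t, CopsWinIn G k t

/-- The `k`-capture time of `G`: the least `t` such that `k` cops can guarantee
capture within `t` rounds. -/
noncomputable def captTime {V : Type u} (G : SimpleGraph V) (k : ℕ) : ℕ :=
  sInf {t | CopsWinIn G k t}

/-!
A cop standing at `m` can play the *shadow* of the robber: after `n` rounds it sits `n` steps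
from `m` on the path from `m` to the robber (or on the robber, if that path is shorter). In a tree
the paths from `m` to two adjacent vertices differ by one edge at the end, so the shadow moves by
at most one step per round, and it reaches the robber after `ecc(m)` rounds. The midpoint of a
diametral path has eccentricity `⌈diam/2⌉`. Conversely, a robber who stays at a vertex farthest
from the cop's start survives `ecc ≥ rad ≥ ⌈diam/2⌉` rounds, in any graph.
-/

namespace SimpleGraph

namespace Walk

variable {V : Type*} {G : SimpleGraph V} {u v w : V}

lemma getVert_succ_eq_or_adj (p : G.Walk u v) (n : ℕ) :
    p.getVert (n + 1) = p.getVert n ∨ G.Adj (p.getVert n) (p.getVert (n + 1)) := by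
  by_cases hn : n < p.length
  · exact Or.inr (p.adj_getVert_succ hn)
  · rw [p.getVert_of_length_le (by omega), p.getVert_of_length_le (by omega)]
    exact Or.inl rfl

lemma getVert_concat_of_le (p : G.Walk u v) (h : G.Adj v w) {n : ℕ} (hn : n ≤ p.length) :
    (p.concat h).getVert n = p.getVert n := by
  rw [concat_eq_append, getVert_append', if_pos hn]

lemma getVert_concat_succ_eq_or_adj (p : G.Walk u v) (h : G.Adj v w) (n : ℕ) :
    (p.concat h).getVert (n + 1) = p.getVert n ∨
      G.Adj (p.getVert n) ((p.concat h).getVert (n + 1)) := by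
  by_cases hn : n ≤ p.length
  · rw [← p.getVert_concat_of_le h hn]
    exact (p.concat h).getVert_succ_eq_or_adj n
  · rw [p.getVert_of_length_le (by omega), (p.concat h).getVert_of_length_le (by simp; omega)]
    exact Or.inr h

lemma getVert_succ_eq_or_adj_getVert_concat (p : G.Walk u v) (h : G.Adj v w) (n : ℕ) :
    p.getVert (n + 1) = (p.concat h).getVert n ∨
      G.Adj ((p.concat h).getVert n) (p.getVert (n + 1)) := by
  by_cases hn : n + 1 ≤ p.length
  · rw [p.getVert_concat_of_le h (by omega)]
    exact p.getVert_succ_eq_or_adj n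
  · rw [p.getVert_of_length_le (by omega)]
    by_cases hn' : n = p.length
    · subst hn'
      rw [p.getVert_concat_of_le h le_rfl, p.getVert_length]
      exact Or.inl rfl
    · rw [(p.concat h).getVert_of_length_le (by simp; omega)]
      exact Or.inr h.symm

variable {p : G.Walk u v}

lemma dist_start_getVert (hp : p.length = G.dist u v) (i : ℕ) :
    G.dist u (p.getVert i) = min i p.length := by
  rw [← length_eq_dist_of_subwalk hp (p.isSubwalk_take i), take_length]

lemma dist_getVert_end (hp : p.length = G.dist u v) (i : ℕ) :
    G.dist (p.getVert i) v = p.length - i := by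
  rw [← length_eq_dist_of_subwalk hp (p.isSubwalk_drop i), drop_length]

lemma dist_add_dist_of_mem_support (hp : p.length = G.dist u v) (hw : w ∈ p.support) :
    G.dist u w + G.dist w v = G.dist u v := by
  obtain ⟨i, rfl, hi⟩ := mem_support_iff_exists_getVert.mp hw
  rw [dist_start_getVert hp, dist_getVert_end hp]
  omega

end Walk

namespace IsTree

variable {V : Type*} {T : SimpleGraph V} (hT : T.IsTree)

noncomputable def path (u v : V) : T.Walk u v :=
  (hT.connected.exists_path_of_dist u v).choose

lemma isPath_path (u v : V) : (hT.path u v).IsPath :=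
  (hT.connected.exists_path_of_dist u v).choose_spec.1

lemma length_path (u v : V) : (hT.path u v).length = T.dist u v :=
  (hT.connected.exists_path_of_dist u v).choose_spec.2

lemma eq_path {u v : V} {p : T.Walk u v} (hp : p.IsPath) : p = hT.path u v :=
  congrArg Subtype.val <|
    (hT.isAcyclic.subsingleton_path u v).elim ⟨p, hp⟩ ⟨_, hT.isPath_path u v⟩

lemma mem_support_path_or {u v x : V} (hx : x ∈ (hT.path u v).support) (w : V) :
    x ∈ (hT.path u w).support ∨ x ∈ (hT.path w v).support := by
  classical
  have hb := hT.eq_path ((hT.path u w).append (hT.path w v)).bypass_isPath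
  rw [← hb] at hx
  exact (Walk.mem_support_append_iff _ _).mp (Walk.support_bypass_subset_support _ hx)

lemma path_eq_concat_or (m : V) {r r' : V} (h : T.Adj r r') :
    hT.path m r' = (hT.path m r).concat h ∨ hT.path m r = (hT.path m r').concat h.symm := by
  by_cases hr' : r' ∈ (hT.path m r).support
  · exact Or.inr <| hT.isAcyclic.path_concat (hT.isPath_path m r') (hT.isPath_path m r) h.symm hr'
  · have hr := hT.isAcyclic.mem_support_of_ne_mem_support_of_adj_of_isPath
      (hT.isPath_path m r') (hT.isPath_path m r) h.symm hr'
    exact Or.inl <| hT.isAcyclic.path_concat (hT.isPath_path m r) (hT.isPath_path m r') h hr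

lemma getVert_path_succ_eq_or_adj (m : V) (n : ℕ) {r r' : V} (hr : r' = r ∨ T.Adj r r') :
    (hT.path m r').getVert (n + 1) = (hT.path m r).getVert n ∨
      T.Adj ((hT.path m r).getVert n) ((hT.path m r').getVert (n + 1)) := by
  rcases hr with rfl | h
  · exact (hT.path m r').getVert_succ_eq_or_adj n
  rcases hT.path_eq_concat_or m h with hext | hext <;> rw [hext]
  · exact (hT.path m r).getVert_concat_succ_eq_or_adj h n
  · exact (hT.path m r').getVert_succ_eq_or_adj_getVert_concat h.symm n

lemma exists_forall_dist_le (hT : T.IsTree) (hfin : T.ediam ≠ ⊤) :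
    ∃ m, ∀ w, T.dist m w ≤ (T.diam + 1) / 2 := by
  have := hT.connected.nonempty
  obtain ⟨u, v, huv⟩ := T.exists_dist_eq_diam
  set p := hT.path u v
  have hp : p.length = T.dist u v := hT.length_path u v
  set j := (T.diam + 1) / 2
  refine ⟨p.getVert j, fun w => ?_⟩
  have hum := p.dist_start_getVert hp j
  have hmv := p.dist_getVert_end hp j
  have huw : T.dist u w ≤ T.diam := dist_le_diam hfin
  have hwv : T.dist w v ≤ T.diam := dist_le_diam hfin
  rcases hT.mem_support_path_or (p.getVert_mem_support j) w with h | h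
  · have := (hT.path u w).dist_add_dist_of_mem_support (hT.length_path u w) h
    omega
  · have := (hT.path w v).dist_add_dist_of_mem_support (hT.length_path w v) h
    rw [dist_comm (u := w)] at this
    omega

end IsTree

end SimpleGraph

open SimpleGraph

section Play

variable {V : Type*} {G : SimpleGraph V} {k : ℕ}

def RobberMoves.stay : RobberMoves G k := ⟨fun _ _ r => r, fun _ _ _ => Or.inl rfl⟩

lemma playFrom_stay_snd (CM : CopMoves G k) (c0 : Fin k → V) (r0 : V) (n : ℕ) :
    (playFrom CM RobberMoves.stay c0 r0 n).2 = r0 := by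
  induction n with
  | zero => rfl
  | succ n ih => exact ih

lemma edist_playFrom_fst_le (CM : CopMoves G k) (RM : RobberMoves G k) (c0 : Fin k → V)
    (r0 : V) (n : ℕ) (i : Fin k) : G.edist (c0 i) ((playFrom CM RM c0 r0 n).1 i) ≤ n := by
  induction n with
  | zero => simp [playFrom]
  | succ n ih =>
    set p := playFrom CM RM c0 r0 n
    have hstep : G.edist (p.1 i) (CM.move n p.1 (RM.move n p.1 p.2) i) ≤ 1 :=
      edist_le_one_iff_adj_or_eq.mpr ((CM.valid ..).symm.imp_right Eq.symm)
    calc G.edist (c0 i) (CM.move n p.1 (RM.move n p.1 p.2) i)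
        ≤ G.edist (c0 i) (p.1 i) + G.edist (p.1 i) (CM.move n p.1 (RM.move n p.1 p.2) i) :=
          SimpleGraph.edist_triangle
      _ ≤ n + 1 := add_le_add ih hstep
      _ = ↑(n + 1) := by push_cast; rfl

lemma CopsWinIn.radius_le {t : ℕ} (h : CopsWinIn G 1 t) : G.radius ≤ t := by
  obtain ⟨c0, CM, hwin⟩ := h
  refine (radius_le_eccent (u := c0 0)).trans ((eccent_le_iff _ _).mpr fun r => ?_)
  obtain ⟨n, hn, i, hcap⟩ := hwin r RobberMoves.stay
  rw [playFrom_stay_snd, Subsingleton.elim i 0] at hcap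
  calc G.edist (c0 0) r = G.edist (c0 0) ((playFrom CM RobberMoves.stay c0 r n).1 0) := by
        rw [hcap]
    _ ≤ n := edist_playFrom_fst_le ..
    _ ≤ t := by exact_mod_cast hn

lemma CopsWinIn.ediam_le_two_mul {t : ℕ} (h : CopsWinIn G 1 t) : G.ediam ≤ ↑(2 * t) := by
  push_cast
  exact G.ediam_le_two_mul_radius.trans (mul_le_mul_right h.radius_le 2)

open scoped Classical in
noncomputable def CopMoves.shadowing (f : ℕ → V → V) : CopMoves G k where
  move n c r i := if f (n + 1) r = c i ∨ G.Adj (c i) (f (n + 1) r) then f (n + 1) r else c i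
  valid n c r i := by
    split_ifs with h
    · exact h
    · exact Or.inl rfl

lemma CopMoves.playFrom_shadowing_fst {f : ℕ → V → V}
    (hf : ∀ n r r', (r' = r ∨ G.Adj r r') →
      f (n + 1) r' = f n r ∨ G.Adj (f n r) (f (n + 1) r'))
    (RM : RobberMoves G k) {c0 : Fin k → V} {r0 : V} (hc0 : ∀ i, c0 i = f 0 r0) (n : ℕ)
    (i : Fin k) :
    (playFrom (shadowing f) RM c0 r0 n).1 i = f n (playFrom (shadowing f) RM c0 r0 n).2 := by
  induction n with
  | zero => exact hc0 i
  | succ n ih =>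
    set p := playFrom (shadowing f) RM c0 r0 n
    have hreach := hf n p.2 (RM.move n p.1 p.2) (RM.valid n p.1 p.2)
    rw [← ih] at hreach
    change (shadowing f).move n p.1 (RM.move n p.1 p.2) i = f (n + 1) (RM.move n p.1 p.2)
    simp only [shadowing, if_pos hreach]

end Play

lemma SimpleGraph.IsTree.copsWinIn_of_forall_dist_le {V : Type*} {T : SimpleGraph V}
    (hT : T.IsTree) {m : V} {t : ℕ} (hm : ∀ w, T.dist m w ≤ t) : CopsWinIn T 1 t := by
  refine ⟨fun _ => m, CopMoves.shadowing fun n r => (hT.path m r).getVert n,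
    fun r0 RM => ⟨t, le_rfl, 0, ?_⟩⟩
  rw [CopMoves.playFrom_shadowing_fst (fun n _ _ => hT.getVert_path_succ_eq_or_adj m n) RM
    (fun _ => (Walk.getVert_zero _).symm)]
  exact Walk.getVert_of_length_le _ ((hT.length_path m _).trans_le (hm _))

theorem capture_time_of_tree_general {V : Type u} (T : SimpleGraph V)
    (hT : T.IsTree) :
    captTime T 1 = (T.diam + 1) / 2 := by
  rcases eq_or_ne T.ediam ⊤ with hinf | hfin
  · -- both sides are junk: `captTime` is `sInf ∅ = 0` and `diam` is `0`
    have hnone : ∀ t, ¬ CopsWinIn T 1 t := fun t ht =>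
      (ENat.natCast_lt_top _).not_ge (hinf ▸ ht.ediam_le_two_mul)
    simp [captTime, hnone, diam_eq_zero_of_ediam_eq_top hinf]
  · obtain ⟨m, hm⟩ := hT.exists_forall_dist_le hfin
    have hwin := hT.copsWinIn_of_forall_dist_le hm
    have hopt : CopsWinIn T 1 (captTime T 1) :=
      Nat.sInf_mem (s := {t | CopsWinIn T 1 t}) ⟨_, hwin⟩
    have hdiam : T.diam ≤ 2 * captTime T 1 := ENat.toNat_le_of_le_natCast hopt.ediam_le_two_mul
    have hle : captTime T 1 ≤ (T.diam + 1) / 2 := Nat.sInf_le hwin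
    omega

/-- For a finite tree `T` with at least one edge, the 1-capture
time of `T` equals `⌈diam(T)/2⌉`. -/
theorem capture_time_of_tree {V : Type u} [Fintype V] (T : SimpleGraph V)
    (hT : T.IsTree) (hE : ∃ x y, T.Adj x y) :
    captTime T 1 = (T.diam + 1) / 2 :=
  capture_time_of_tree_general T hT
end

section
/- Let T1 and T2 be finite rooted trees, and consider the Cops and Robber game with two cops on the Cartesian product T1 □ T2, with cop C1 at (u1,u2), cop C2 at (v1,v2), and the robber at (r1,r2). Suppose that: (i) for i = 1,2, the vertex r_i is a descendant of u_i and of v_i; (ii) d(v1,r1) = 1 + d(u1,r1); (iii) u2 = v2; and (iv) d(u2,r2) ∈ {d(u1,r1), d(v1,r1)}. If it is the robber's turn to move, then the two cops have a strategy from this configuration that captures the robber within m rounds, where m = ⌊(h(u1) + h(v1) + h(u2) + h(v2))/2⌋. -/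
/-!
Cops and Robber game on a simple graph `G` with `k` cops.
Convention (as in the paper): the cops first choose starting positions, then the
robber chooses a starting position; in every subsequent round the robber moves
first (staying or moving to an adjacent vertex) and then each cop moves
(staying or moving to an adjacent vertex).  The cops win as soon as some cop
occupies the robber's vertex.  Strategies have full information: a move may
depend on the round number and on all current positions.
-/

open SimpleGraph

universe u v w

/-- In the tree `T` rooted at `s`, the vertex `w` is a *descendant* of `v`,
i.e. `v` lies on the unique path from `s` to `w`. -/
def IsTreeDesc {V : Type u} (T : SimpleGraph V) (s v w : V) : Prop :=
  T.dist s w = T.dist s v + T.dist v w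

/-- A leaf of a tree: a vertex with exactly one neighbour. -/
def IsTreeLeaf {V : Type u} (T : SimpleGraph V) (v : V) : Prop :=
  (T.neighborSet v).ncard = 1

/-- The height of `v` in the tree `T` rooted at `s`: the maximum distance from
`v` to a leaf of `T` that is a descendant of `v`. -/
noncomputable def rootedHeight {V : Type u} (T : SimpleGraph V) (s v : V) : ℕ :=
  sSup {d | ∃ l, IsTreeLeaf T l ∧ IsTreeDesc T s v l ∧ T.dist v l = d}


/-! The two cops keep the following invariant, robber to move: in each tree the robber lies
below both cops, the cops share their `T2`-coordinate `w`, the second cop is one step farther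
from the robber in `T1` than the first, and `d(w, r₂) - d(u₁, r₁) ∈ {0, 1}`. After the robber
moves, a cop next to it captures; otherwise both cops step towards the robber, and hence down
the trees, in the coordinate in which the first cop is farther from it, which restores the
invariant. Every such round lowers `h(u₁) + h(v₁) + 2 h(w)` by at least `2`, and once this
potential is at most `1` the first cop stands on the robber. -/

section Trees

variable {V : Type*} {T : SimpleGraph V} {s u v w x y z r r' : V}

theorem SimpleGraph.Connected.exists_adj_dist_add_one_eq (hT : T.Connected)
    (h : T.dist x r ≠ 0) : ∃ y, T.Adj x y ∧ T.dist y r + 1 = T.dist x r := by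
  obtain ⟨p, hp⟩ := hT.exists_walk_length_eq_dist x r
  cases p with
  | nil => simp at h
  | cons hadj q =>
    refine ⟨_, hadj, le_antisymm ?_ ?_⟩
    · have := T.dist_le q
      rw [Walk.length_cons] at hp
      omega
    · calc T.dist x r ≤ T.dist x _ + T.dist _ r := hT.dist_triangle
        _ = _ := by rw [dist_eq_one_iff_adj.mpr hadj, add_comm]

theorem SimpleGraph.IsTree.eq_of_adj_of_dist_add_one_eq (hT : T.IsTree) (hx : T.Adj x r)
    (hy : T.Adj y r) (hdx : T.dist s x + 1 = T.dist s r) (hdy : T.dist s y + 1 = T.dist s r) :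
    x = y := by
  classical
  obtain ⟨p, hp, -⟩ := hT.connected.exists_path_of_dist s r
  have eq_penultimate (z : V) (hz : T.Adj z r) (hdz : T.dist s z + 1 = T.dist s r) :
      z = p.penultimate := by
    obtain ⟨q, hq, hql⟩ := hT.connected.exists_path_of_dist s z
    have hrq : r ∉ q.support := fun hr => by
      have := T.dist_le (q.takeUntil r hr)
      have := q.length_takeUntil_le_length hr
      omega
    exact hT.isAcyclic.eq_penultimate_of_adj_end hp hz.symm
      (hT.isAcyclic.mem_support_of_ne_mem_support_of_adj_of_isPath hp hq hz.symm hrq)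
  rw [eq_penultimate x hx hdx, eq_penultimate y hy hdy]

open Classical in
noncomputable def SimpleGraph.stepToward (G : SimpleGraph V) (x r : V) : V :=
  if h : ∃ y, G.Adj x y ∧ G.dist y r + 1 = G.dist x r then h.choose else x

theorem SimpleGraph.stepToward_eq_or_adj (G : SimpleGraph V) (x r : V) :
    G.stepToward x r = x ∨ G.Adj x (G.stepToward x r) := by
  unfold stepToward
  split_ifs with h
  · exact .inr h.choose_spec.1
  · exact .inl rfl

theorem SimpleGraph.Connected.adj_stepToward (hT : T.Connected) (h : T.dist x r ≠ 0) :
    T.Adj x (T.stepToward x r) ∧ T.dist (T.stepToward x r) r + 1 = T.dist x r := by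
  have hex := hT.exists_adj_dist_add_one_eq h
  rw [stepToward, dif_pos hex]
  exact hex.choose_spec

namespace IsTreeDesc

theorem of_adj_of_dist_eq_add_one (h : IsTreeDesc T s u r) (hT : T.Connected)
    (hadj : T.Adj r r') (hr' : T.dist s r' = T.dist s r + 1) : IsTreeDesc T s u r' := by
  have := hT.dist_triangle (u := u) (v := r) (w := r')
  have := hT.dist_triangle (u := s) (v := u) (w := r')
  rw [dist_eq_one_iff_adj.mpr hadj] at *
  unfold IsTreeDesc at *
  omega

theorem of_adj (h : IsTreeDesc T s u r) (hT : T.IsTree) (hadj : T.Adj r r') (hur : u ≠ r) :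
    IsTreeDesc T s u r' := by
  rcases hT.dist_eq_dist_add_one_of_adj s hadj with hr' | hr'
  · -- `r'` is the parent of `r`, and so is the neighbour of `r` on the way to `u`
    obtain ⟨p, hp, hpu⟩ := hT.connected.exists_adj_dist_add_one_eq (x := r) (r := u)
      (by rwa [dist_comm, Ne, hT.connected.dist_eq_zero_iff])
    have := hT.connected.dist_triangle (u := s) (v := u) (w := p)
    have := hT.connected.dist_triangle (u := s) (v := p) (w := r)
    rw [dist_comm (u := p), dist_comm (u := r)] at hpu
    rw [dist_eq_one_iff_adj.mpr hp.symm] at *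
    unfold IsTreeDesc at *
    obtain rfl := hT.eq_of_adj_of_dist_add_one_eq hp.symm hadj.symm (by omega) hr'.symm
    omega
  · exact h.of_adj_of_dist_eq_add_one hT.connected hadj hr'

theorem trans (hT : T.Connected) (hxy : IsTreeDesc T s x y) (hyz : IsTreeDesc T s y z) :
    IsTreeDesc T s x z ∧ T.dist x z = T.dist x y + T.dist y z := by
  have := hT.dist_triangle (u := x) (v := y) (w := z)
  have := hT.dist_triangle (u := s) (v := x) (w := z)
  unfold IsTreeDesc at *
  constructor <;> omega

theorem stepToward (h : IsTreeDesc T s x r) (hT : T.Connected) (hx : T.dist x r ≠ 0) :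
    IsTreeDesc T s (T.stepToward x r) r ∧ T.dist s (T.stepToward x r) = T.dist s x + 1 := by
  obtain ⟨hadj, hdist⟩ := hT.adj_stepToward hx
  have := hT.dist_triangle (u := s) (v := x) (w := T.stepToward x r)
  have := hT.dist_triangle (u := s) (v := T.stepToward x r) (w := r)
  rw [dist_eq_one_iff_adj.mpr hadj] at *
  unfold IsTreeDesc at *
  constructor <;> omega

end IsTreeDesc

theorem bddAbove_descLeafDist [Finite V] (T : SimpleGraph V) (s v : V) :
    BddAbove {d | ∃ l, IsTreeLeaf T l ∧ IsTreeDesc T s v l ∧ T.dist v l = d} :=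
  (Set.finite_range (T.dist v)).subset (by rintro _ ⟨l, -, -, rfl⟩; exact ⟨l, rfl⟩) |>.bddAbove

theorem exists_isTreeLeaf_isTreeDesc [Finite V] (hT : T.IsTree) (h : IsTreeDesc T s v w)
    (hw : w ≠ s) : ∃ l, IsTreeLeaf T l ∧ IsTreeDesc T s v l ∧ T.dist v w ≤ T.dist v l := by
  obtain ⟨l, hl, hmax⟩ := Set.exists_max_image {l | IsTreeDesc T s v l} (T.dist v)
    (Set.toFinite _) ⟨w, h⟩
  refine ⟨l, ?_, hl, hmax w h⟩
  -- a farthest descendant has no child, so its only neighbour is its parent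
  have hl' : IsTreeDesc T s v l := hl
  have hls : T.dist l s ≠ 0 := by
    have := hmax w h
    have := (hT.connected.dist_eq_zero_iff (u := s) (v := w)).not.mpr hw.symm
    unfold IsTreeDesc at h hl'
    rw [dist_comm]
    omega
  obtain ⟨p, hp, hps⟩ := hT.connected.exists_adj_dist_add_one_eq hls
  rw [dist_comm (u := p), dist_comm (u := l)] at hps
  have hnbr : T.neighborSet l = {p} := by
    ext y
    refine ⟨fun hy => ?_, fun hy => hy ▸ hp⟩
    rcases hT.dist_eq_dist_add_one_of_adj s hy with hy' | hy'
    · exact hT.eq_of_adj_of_dist_add_one_eq hy.symm hp.symm hy'.symm hps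
    · have hvy : IsTreeDesc T s v y := hl'.of_adj_of_dist_eq_add_one hT.connected hy hy'
      have := hmax y hvy
      unfold IsTreeDesc at hvy hl'
      omega
  rw [IsTreeLeaf, hnbr, Set.ncard_singleton]

theorem dist_le_rootedHeight [Finite V] (hT : T.IsTree) (h : IsTreeDesc T s v w) :
    T.dist v w ≤ rootedHeight T s v := by
  rcases eq_or_ne w s with rfl | hw
  · rw [IsTreeDesc, dist_self] at h
    omega
  · obtain ⟨l, hl, hvl, hle⟩ := exists_isTreeLeaf_isTreeDesc hT h hw
    exact hle.trans (le_csSup (bddAbove_descLeafDist T s v) ⟨l, hl, hvl, rfl⟩)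

theorem rootedHeight_lt_of_adj [Finite V] (hT : T.IsTree) (hadj : T.Adj x y)
    (hy : T.dist s y = T.dist s x + 1) : rootedHeight T s y < rootedHeight T s x := by
  have hyy : IsTreeDesc T s y y := by simp [IsTreeDesc]
  obtain ⟨l, hl, hyl, -⟩ := exists_isTreeLeaf_isTreeDesc hT hyy (by rintro rfl; simp at hy)
  obtain ⟨l, hl, hyl, hdist⟩ := Nat.sSup_mem (s := {d | ∃ l, IsTreeLeaf T l ∧
    IsTreeDesc T s y l ∧ T.dist y l = d}) ⟨_, l, hl, hyl, rfl⟩ (bddAbove_descLeafDist T s y)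
  have hxy : IsTreeDesc T s x y := by
    rw [IsTreeDesc, hy, dist_eq_one_iff_adj.mpr hadj]
  obtain ⟨hxl, hxl_dist⟩ := hxy.trans hT.connected hyl
  calc rootedHeight T s y = T.dist y l := hdist.symm
    _ < T.dist x l := by rw [hxl_dist, dist_eq_one_iff_adj.mpr hadj]; omega
    _ ≤ rootedHeight T s x := le_csSup (bddAbove_descLeafDist T s x) ⟨l, hl, hxl, rfl⟩

theorem IsTreeDesc.rootedHeight_stepToward_lt [Finite V] (h : IsTreeDesc T s x r)
    (hT : T.IsTree) (hx : T.dist x r ≠ 0) :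
    rootedHeight T s (T.stepToward x r) < rootedHeight T s x :=
  rootedHeight_lt_of_adj hT (hT.connected.adj_stepToward hx).1 (h.stepToward hT.connected hx).2

end Trees

section Game

variable {V : Type*} {G : SimpleGraph V} {k : ℕ}

def RobberMoves.shift (RM : RobberMoves G k) : RobberMoves G k :=
  ⟨fun n => RM.move (n + 1), fun n => RM.valid (n + 1)⟩

def CopMoves.ofResponse (f : (Fin k → V) → V → Fin k → V)
    (hf : ∀ c r i, f c r i = c i ∨ G.Adj (c i) (f c r i)) : CopMoves G k :=
  ⟨fun _ => f, fun _ => hf⟩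

theorem playFrom_ofResponse_succ (f : (Fin k → V) → V → Fin k → V)
    (hf : ∀ c r i, f c r i = c i ∨ G.Adj (c i) (f c r i)) (RM : RobberMoves G k)
    (c : Fin k → V) (r : V) (n : ℕ) :
    playFrom (.ofResponse f hf) RM c r (n + 1) =
      playFrom (.ofResponse f hf) RM.shift (f c (RM.move 0 c r)) (RM.move 0 c r) n := by
  induction n with
  | zero => rfl
  | succ n ih => rw [playFrom, ih]; rfl

theorem copsWinFrom_of_invariant (f : (Fin k → V) → V → Fin k → V)
    (hf : ∀ c r i, f c r i = c i ∨ G.Adj (c i) (f c r i))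
    (P : (Fin k → V) → V → ℕ → Prop) (capture : ∀ c r, P c r 0 → ∃ i, c i = r)
    (step : ∀ c r r' t, P c r (t + 1) → r' = r ∨ G.Adj r r' →
      (∃ i, f c r' i = r') ∨ P (f c r') r' t)
    {c : Fin k → V} {r : V} {t : ℕ} (h : P c r t) : CopsWinFrom G k c r t := by
  refine ⟨.ofResponse f hf, fun RM => ?_⟩
  induction t generalizing c r RM with
  | zero =>
    obtain ⟨i, hi⟩ := capture c r h
    exact ⟨0, le_rfl, i, hi⟩
  | succ t ih =>
    rcases step c r _ t h (RM.valid 0 c r) with ⟨i, hi⟩ | h'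
    · exact ⟨1, by omega, i, hi⟩
    · obtain ⟨n, hn, i, hi⟩ := ih h' RM.shift
      exact ⟨n + 1, by omega, i, by rwa [playFrom_ofResponse_succ]⟩

end Game

section Chase

variable {V1 V2 : Type*} {T1 : SimpleGraph V1} {T2 : SimpleGraph V2}
  {s1 u1 v1 x : V1} {s2 w y : V2} {r r' : V1 × V2}

noncomputable def chaseResponse (T1 : SimpleGraph V1) (T2 : SimpleGraph V2)
    (c : Fin 2 → V1 × V2) (r : V1 × V2) (i : Fin 2) : V1 × V2 :=
  open Classical in
  if c i = r ∨ (T1 □ T2).Adj (c i) r then r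
  else if T2.dist (c 0).2 r.2 ≤ T1.dist (c 0).1 r.1 then (T1.stepToward (c i).1 r.1, (c i).2)
  else ((c i).1, T2.stepToward (c i).2 r.2)

theorem chaseResponse_eq_or_adj (c : Fin 2 → V1 × V2) (r : V1 × V2) (i : Fin 2) :
    chaseResponse T1 T2 c r i = c i ∨ (T1 □ T2).Adj (c i) (chaseResponse T1 T2 c r i) := by
  unfold chaseResponse
  split_ifs with hnear
  · exact hnear.imp Eq.symm id
  · rcases T1.stepToward_eq_or_adj (c i).1 r.1 with h | h
    · exact .inl (Prod.ext h rfl)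
    · exact .inr (boxProd_adj.mpr (.inl ⟨h, rfl⟩))
  · rcases T2.stepToward_eq_or_adj (c i).2 r.2 with h | h
    · exact .inl (Prod.ext rfl h)
    · exact .inr (boxProd_adj.mpr (.inr ⟨h, rfl⟩))

structure Chase (T1 : SimpleGraph V1) (T2 : SimpleGraph V2) (s1 : V1) (s2 : V2)
    (u1 v1 : V1) (w : V2) (r : V1 × V2) : Prop where
  desc_u : IsTreeDesc T1 s1 u1 r.1
  desc_v : IsTreeDesc T1 s1 v1 r.1
  desc_w : IsTreeDesc T2 s2 w r.2
  dist_v : T1.dist v1 r.1 = T1.dist u1 r.1 + 1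

noncomputable def chasePotential (T1 : SimpleGraph V1) (T2 : SimpleGraph V2) (s1 : V1) (s2 : V2)
    (u1 v1 : V1) (w : V2) : ℕ :=
  rootedHeight T1 s1 u1 + rootedHeight T1 s1 v1 + 2 * rootedHeight T2 s2 w

theorem chaseResponse_of_far (hu : ¬((u1, w) = r ∨ (T1 □ T2).Adj (u1, w) r))
    (hv : ¬((v1, w) = r ∨ (T1 □ T2).Adj (v1, w) r)) :
    chaseResponse T1 T2 ![(u1, w), (v1, w)] r =
      if T2.dist w r.2 ≤ T1.dist u1 r.1 then
        ![(T1.stepToward u1 r.1, w), (T1.stepToward v1 r.1, w)]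
      else ![(u1, T2.stepToward w r.2), (v1, T2.stepToward w r.2)] := by
  funext i
  have hfar : ¬(![(u1, w), (v1, w)] i = r ∨ (T1 □ T2).Adj (![(u1, w), (v1, w)] i) r) := by
    fin_cases i
    exacts [hu, hv]
  rw [chaseResponse, if_neg hfar, Matrix.cons_val_zero]
  split_ifs <;> fin_cases i <;> rfl

namespace Chase

theorem dist_v_of_isTreeDesc (h : Chase T1 T2 s1 s2 u1 v1 w r) (hu : IsTreeDesc T1 s1 u1 x)
    (hv : IsTreeDesc T1 s1 v1 x) : T1.dist v1 x = T1.dist u1 x + 1 := by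
  have := h.desc_u
  have := h.desc_v
  have := h.dist_v
  unfold IsTreeDesc at *
  omega

theorem of_adj_fst (h : Chase T1 T2 s1 s2 u1 v1 w r) (hT1 : T1.IsTree) (hT2 : T2.Connected)
    (hx : T1.Adj r.1 x) (hbal : T2.dist w r.2 ≤ T1.dist u1 r.1 + 1)
    (hv : ¬((v1, w) = (x, r.2) ∨ (T1 □ T2).Adj (v1, w) (x, r.2))) :
    Chase T1 T2 s1 s2 u1 v1 w (x, r.2) := by
  have hv1 : v1 ≠ r.1 := fun he => by simpa [he] using h.dist_v
  have hdvx := h.desc_v.of_adj hT1 hx hv1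
  have hdux : IsTreeDesc T1 s1 u1 x := by
    rcases eq_or_ne u1 r.1 with hu1 | hu1
    · rcases hT1.dist_eq_dist_add_one_of_adj s1 hx with hup | hdown
      · -- the robber climbed from `u1` to its parent, which is `v1`
        have hvx : v1 = x := by
          have := h.desc_v
          have := h.dist_v
          rw [← hT1.connected.dist_eq_zero_iff]
          simp only [hu1, dist_self, IsTreeDesc] at *
          omega
        refine absurd ?_ hv
        subst hvx
        have hw : T2.dist w r.2 ≤ 1 := by simpa [hu1] using hbal
        rcases Nat.le_one_iff_eq_zero_or_eq_one.mp hw with hw | hw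
        · exact .inl (by rw [hT2.dist_eq_zero_iff.mp hw])
        · exact .inr (boxProd_adj.mpr (.inr ⟨dist_eq_one_iff_adj.mp hw, rfl⟩))
      · exact h.desc_u.of_adj_of_dist_eq_add_one hT1.connected hx hdown
    · exact h.desc_u.of_adj hT1 hx hu1
  exact ⟨hdux, hdvx, h.desc_w, h.dist_v_of_isTreeDesc hdux hdvx⟩

theorem of_adj_snd (h : Chase T1 T2 s1 s2 u1 v1 w r) (hT2 : T2.IsTree) (hy : T2.Adj r.2 y)
    (hw : w ≠ r.2) : Chase T1 T2 s1 s2 u1 v1 w (r.1, y) :=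
  ⟨h.desc_u, h.desc_v, h.desc_w.of_adj hT2 hy hw, h.dist_v⟩

theorem of_robber_move (h : Chase T1 T2 s1 s2 u1 v1 w r) (hT1 : T1.IsTree) (hT2 : T2.IsTree)
    (hbal : T2.dist w r.2 = T1.dist u1 r.1 ∨ T2.dist w r.2 = T1.dist u1 r.1 + 1)
    (hr' : r' = r ∨ (T1 □ T2).Adj r r')
    (hu : ¬((u1, w) = r' ∨ (T1 □ T2).Adj (u1, w) r'))
    (hv : ¬((v1, w) = r' ∨ (T1 □ T2).Adj (v1, w) r')) :
    Chase T1 T2 s1 s2 u1 v1 w r' ∧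
      T1.dist u1 r'.1 ≤ T2.dist w r'.2 + 1 ∧ T2.dist w r'.2 ≤ T1.dist u1 r'.1 + 2 := by
  rcases hr' with rfl | hadj
  · exact ⟨h, by omega, by omega⟩
  obtain ⟨x, y⟩ := r'
  rcases boxProd_adj.mp hadj with ⟨hx, hy⟩ | ⟨hy, hx⟩
  · dsimp only at hx hy
    subst hy
    have h' := h.of_adj_fst hT1 hT2.connected hx (by omega) hv
    have := h.desc_u
    have := h'.desc_u
    have := hT1.dist_eq_dist_add_one_of_adj s1 hx
    refine ⟨h', ?_⟩
    unfold IsTreeDesc at *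
    dsimp only at *
    omega
  · dsimp only at hx hy
    subst hx
    have hw : w ≠ r.2 := by
      rintro rfl
      have hur : u1 = r.1 := hT1.connected.dist_eq_zero_iff.mp (by rw [dist_self] at hbal; omega)
      exact hu (.inr (boxProd_adj.mpr (.inr ⟨hy, hur⟩)))
    have h' := h.of_adj_snd hT2 hy hw
    have := h.desc_w
    have := h'.desc_w
    have := hT2.dist_eq_dist_add_one_of_adj s2 hy
    refine ⟨h', ?_⟩
    unfold IsTreeDesc at *
    dsimp only at *
    omega

theorem stepToward_fst (h : Chase T1 T2 s1 s2 u1 v1 w r) (hT1 : T1.Connected)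
    (ha : T1.dist u1 r.1 ≠ 0) :
    Chase T1 T2 s1 s2 (T1.stepToward u1 r.1) (T1.stepToward v1 r.1) w r ∧
      T1.dist (T1.stepToward u1 r.1) r.1 + 1 = T1.dist u1 r.1 := by
  have hv : T1.dist v1 r.1 ≠ 0 := by rw [h.dist_v]; omega
  have hu' := (hT1.adj_stepToward ha).2
  have hv' := (hT1.adj_stepToward hv).2
  refine ⟨⟨(h.desc_u.stepToward hT1 ha).1, (h.desc_v.stepToward hT1 hv).1, h.desc_w, ?_⟩, hu'⟩
  have := h.dist_v
  omega

theorem stepToward_snd (h : Chase T1 T2 s1 s2 u1 v1 w r) (hT2 : T2.Connected)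
    (hb : T2.dist w r.2 ≠ 0) : Chase T1 T2 s1 s2 u1 v1 (T2.stepToward w r.2) r :=
  ⟨h.desc_u, h.desc_v, (h.desc_w.stepToward hT2 hb).1, h.dist_v⟩

theorem eq_of_chasePotential_le_one [Finite V1] [Finite V2] (h : Chase T1 T2 s1 s2 u1 v1 w r)
    (hT1 : T1.IsTree) (hT2 : T2.IsTree) (hΦ : chasePotential T1 T2 s1 s2 u1 v1 w ≤ 1) :
    (u1, w) = r := by
  have := dist_le_rootedHeight hT1 h.desc_u
  have := dist_le_rootedHeight hT1 h.desc_v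
  have := dist_le_rootedHeight hT2 h.desc_w
  have := h.dist_v
  unfold chasePotential at hΦ
  exact Prod.ext (hT1.connected.dist_eq_zero_iff.mp (show T1.dist u1 r.1 = 0 by omega))
    (hT2.connected.dist_eq_zero_iff.mp (show T2.dist w r.2 = 0 by omega))

theorem step [Finite V1] [Finite V2] (h : Chase T1 T2 s1 s2 u1 v1 w r)
    (hT1 : T1.IsTree) (hT2 : T2.IsTree)
    (hbal : T2.dist w r.2 = T1.dist u1 r.1 ∨ T2.dist w r.2 = T1.dist u1 r.1 + 1)
    (hr' : r' = r ∨ (T1 □ T2).Adj r r') :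
    (∃ i, chaseResponse T1 T2 ![(u1, w), (v1, w)] r' i = r') ∨
      ∃ u1' v1' w', chaseResponse T1 T2 ![(u1, w), (v1, w)] r' = ![(u1', w'), (v1', w')] ∧
        Chase T1 T2 s1 s2 u1' v1' w' r' ∧
        (T2.dist w' r'.2 = T1.dist u1' r'.1 ∨ T2.dist w' r'.2 = T1.dist u1' r'.1 + 1) ∧
        chasePotential T1 T2 s1 s2 u1' v1' w' + 2 ≤ chasePotential T1 T2 s1 s2 u1 v1 w := by
  by_cases hnear : ∃ i, ![(u1, w), (v1, w)] i = r' ∨ (T1 □ T2).Adj (![(u1, w), (v1, w)] i) r'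
  · obtain ⟨i, hi⟩ := hnear
    exact .inl ⟨i, by rw [chaseResponse, if_pos hi]⟩
  have hu : ¬((u1, w) = r' ∨ (T1 □ T2).Adj (u1, w) r') := fun hc => hnear ⟨0, hc⟩
  have hv : ¬((v1, w) = r' ∨ (T1 □ T2).Adj (v1, w) r') := fun hc => hnear ⟨1, hc⟩
  obtain ⟨h', ha', hb'⟩ := h.of_robber_move hT1 hT2 hbal hr' hu hv
  right
  unfold chasePotential
  by_cases hle : T2.dist w r'.2 ≤ T1.dist u1 r'.1
  · have ha0 : T1.dist u1 r'.1 ≠ 0 := fun ha0 => hu (.inl (Prod.ext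
      (hT1.connected.dist_eq_zero_iff.mp ha0)
      (hT2.connected.dist_eq_zero_iff.mp (show T2.dist w r'.2 = 0 by omega))))
    obtain ⟨h'', hdist⟩ := h'.stepToward_fst hT1.connected ha0
    refine ⟨_, _, w, by rw [chaseResponse_of_far hu hv, if_pos hle], h'', by omega, ?_⟩
    · have := h'.desc_u.rootedHeight_stepToward_lt hT1 ha0
      have := h'.desc_v.rootedHeight_stepToward_lt hT1 (by rw [h'.dist_v]; omega)
      omega
  · have hb0 : T2.dist w r'.2 ≠ 0 := by omega
    refine ⟨u1, v1, _, by rw [chaseResponse_of_far hu hv, if_neg hle],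
      h'.stepToward_snd hT2.connected hb0, ?_, ?_⟩
    · have := (hT2.connected.adj_stepToward hb0).2
      omega
    · have := h'.desc_w.rootedHeight_stepToward_lt hT2 hb0
      omega

end Chase

theorem copsWinFrom_of_chase [Finite V1] [Finite V2] (hT1 : T1.IsTree) (hT2 : T2.IsTree)
    (h : Chase T1 T2 s1 s2 u1 v1 w r)
    (hbal : T2.dist w r.2 = T1.dist u1 r.1 ∨ T2.dist w r.2 = T1.dist u1 r.1 + 1) {t : ℕ}
    (ht : chasePotential T1 T2 s1 s2 u1 v1 w ≤ 2 * t + 1) :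
    CopsWinFrom (T1 □ T2) 2 ![(u1, w), (v1, w)] r t := by
  refine copsWinFrom_of_invariant (chaseResponse T1 T2) chaseResponse_eq_or_adj
    (fun c r t => ∃ u1 v1 w, c = ![(u1, w), (v1, w)] ∧ Chase T1 T2 s1 s2 u1 v1 w r ∧
      (T2.dist w r.2 = T1.dist u1 r.1 ∨ T2.dist w r.2 = T1.dist u1 r.1 + 1) ∧
      chasePotential T1 T2 s1 s2 u1 v1 w ≤ 2 * t + 1) ?_ ?_ ⟨u1, v1, w, rfl, h, hbal, ht⟩
  · rintro c r ⟨u1, v1, w, rfl, h, -, ht⟩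
    exact ⟨0, h.eq_of_chasePotential_le_one hT1 hT2 ht⟩
  · rintro c r r' t ⟨u1, v1, w, rfl, h, hbal, ht⟩ hr'
    rcases h.step hT1 hT2 hbal hr' with hcap | ⟨u1', v1', w', hc, h', hbal', hΦ⟩
    · exact .inl hcap
    · exact .inr ⟨u1', v1', w', hc, h', hbal', by omega⟩

end Chase

theorem cops_win_from_config_general {V1 : Type u} {V2 : Type v} [Fintype V1] [Fintype V2]
    (T1 : SimpleGraph V1) (T2 : SimpleGraph V2)
    (hT1 : T1.IsTree) (hT2 : T2.IsTree) (s1 : V1) (s2 : V2)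
    (u1 v1 r1 : V1) (u2 v2 r2 : V2)
    (hdu1 : IsTreeDesc T1 s1 u1 r1) (hdv1 : IsTreeDesc T1 s1 v1 r1)
    (hdu2 : IsTreeDesc T2 s2 u2 r2)
    (h1 : T1.dist v1 r1 = 1 + T1.dist u1 r1)
    (h2 : u2 = v2)
    (h3 : T2.dist u2 r2 = T1.dist u1 r1 ∨ T2.dist u2 r2 = T1.dist v1 r1) :
    CopsWinFrom (T1 □ T2) 2 ![(u1, u2), (v1, v2)] (r1, r2)
      ((rootedHeight T1 s1 u1 + rootedHeight T1 s1 v1 +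
        rootedHeight T2 s2 u2 + rootedHeight T2 s2 v2) / 2) := by
  subst h2
  refine copsWinFrom_of_chase hT1 hT2 ⟨hdu1, hdv1, hdu2, by dsimp only; omega⟩
    (by dsimp only; omega) ?_
  unfold chasePotential
  omega

/-- Lemma 1 of the paper.  In the game with two cops on
`T1 □ T2` (both trees rooted), with cop 1 at `(u1,u2)`, cop 2 at `(v1,v2)` and
the robber at `(r1,r2)`, if `r i` is a descendant of `u i` and of `v i`
(`i = 1,2`), `d(v1,r1) = 1 + d(u1,r1)`, `u2 = v2`, and
`d(u2,r2) ∈ {d(u1,r1), d(v1,r1)}`, then — the robber moving first — the cops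
can capture the robber within `⌊(h(u1)+h(v1)+h(u2)+h(v2))/2⌋` rounds. -/
theorem cops_win_from_config {V1 : Type u} {V2 : Type v} [Fintype V1] [Fintype V2]
    (T1 : SimpleGraph V1) (T2 : SimpleGraph V2)
    (hT1 : T1.IsTree) (hT2 : T2.IsTree) (s1 : V1) (s2 : V2)
    (u1 v1 r1 : V1) (u2 v2 r2 : V2)
    (hdu1 : IsTreeDesc T1 s1 u1 r1) (hdv1 : IsTreeDesc T1 s1 v1 r1)
    (hdu2 : IsTreeDesc T2 s2 u2 r2) (hdv2 : IsTreeDesc T2 s2 v2 r2)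
    (h1 : T1.dist v1 r1 = 1 + T1.dist u1 r1)
    (h2 : u2 = v2)
    (h3 : T2.dist u2 r2 = T1.dist u1 r1 ∨ T2.dist u2 r2 = T1.dist v1 r1) :
    CopsWinFrom (T1 □ T2) 2 ![(u1, u2), (v1, v2)] (r1, r2)
      ((rootedHeight T1 s1 u1 + rootedHeight T1 s1 v1 +
        rootedHeight T2 s2 u2 + rootedHeight T2 s2 v2) / 2) :=
  cops_win_from_config_general T1 T2 hT1 hT2 s1 s2 u1 v1 r1 u2 v2 r2 hdu1 hdv1 hdu2 h1 h2 h3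
end

section
/- Let G be a finite connected 2-cop-win simple graph, and let u be a vertex of G contained in an induced cycle C of length 4 such that for every vertex v of G, |N(v) ∩ V(C)| ≤ 2. If (c1, c2) is a central 2-tuple of G, then d(u,c1) + d(u,c2) ≤ 2·capt_2(G) + 1. -/
/-!
Cops and Robber game on a simple graph `G` with `k` cops.
Convention (as in the paper): the cops first choose starting positions, then the
robber chooses a starting position; in every subsequent round the robber moves
first (staying or moving to an adjacent vertex) and then each cop moves
(staying or moving to an adjacent vertex).  The cops win as soon as some cop
occupies the robber's vertex.  Strategies have full information: a move may
depend on the round number and on all current positions.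
-/

open SimpleGraph

universe u v w

/-- `C` is an induced cycle of length 4 in `G`: four distinct vertices forming a
4-cycle with no chords. -/
def IsInducedC4 {V : Type u} (G : SimpleGraph V) (C : Set V) : Prop :=
  ∃ w0 w1 w2 w3 : V,
    C = {w0, w1, w2, w3} ∧
    w0 ≠ w1 ∧ w0 ≠ w2 ∧ w0 ≠ w3 ∧ w1 ≠ w2 ∧ w1 ≠ w3 ∧ w2 ≠ w3 ∧
    G.Adj w0 w1 ∧ G.Adj w1 w2 ∧ G.Adj w2 w3 ∧ G.Adj w3 w0 ∧
    ¬ G.Adj w0 w2 ∧ ¬ G.Adj w1 w3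

/-- `(c1, c2)` is a central 2-tuple of `G`: starting from these vertices the
two cops can capture the robber within `captTime G 2` rounds. -/
def IsCentralPair {V : Type u} (G : SimpleGraph V) (c1 c2 : V) : Prop :=
  ∃ CM : CopMoves G 2, ∀ (r0 : V) (RM : RobberMoves G 2),
    CapturedIn CM RM ![c1, c2] r0 (captTime G 2)


/-!
Let `T = capt₂(G)` and suppose `d(u,c1) + d(u,c2) ≥ 2T + 2`. The robber stays on `C`, never
leaving a vertex that is outside both cops' closed neighbourhoods, and otherwise stepping to such a
vertex of `C`. As every vertex has at most two neighbours on `C`, one cop cannot cover a vertex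
`x ∈ C` together with its two neighbours on `C` unless it stands on `x`; two cops doing so without
standing on `x` are at total distance at most `3` from `x`.

If both cops start at distance `≥ T` from `u`, the robber waits at `u`: after `T - 1` rounds the
cops are still at total distance `≥ 4` from `u`, so he also escapes in round `T`. Otherwise one cop
starts at distance `≥ T + 3` from `u` and covers no vertex of `C` before round `T`, while the
other cop alone cannot trap the robber. Finally `T ≥ 1`, as two cops cannot occupy all of `C`.
-/

namespace SimpleGraph

variable {V : Type u} {G : SimpleGraph V}

def closedNeighborSet (G : SimpleGraph V) (v : V) : Set V := insert v (G.neighborSet v)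

theorem dist_le_one_of_mem_closedNeighborSet {v x : V} (h : x ∈ G.closedNeighborSet v) :
    G.dist v x ≤ 1 := by
  rcases h with rfl | h
  · simp
  · exact (dist_eq_one_iff_adj.2 h).le

theorem Connected.dist_le_dist_add_one_of_mem_closedNeighborSet (hG : G.Connected)
    {v x : V} (h : x ∈ G.closedNeighborSet v) (w : V) : G.dist w v ≤ G.dist w x + 1 := by
  have := hG.dist_triangle (u := w) (v := x) (w := v)
  have := dist_le_one_of_mem_closedNeighborSet h
  rw [dist_comm (u := x)] at *
  omega

theorem Connected.dist_le_two_of_adj_of_adj (hG : G.Connected) {x y z : V}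
    (hxy : G.Adj x y) (hyz : G.Adj y z) : G.dist x z ≤ 2 := by
  have := hG.dist_triangle (u := x) (v := y) (w := z)
  rw [dist_eq_one_iff_adj.2 hxy, dist_eq_one_iff_adj.2 hyz] at this
  exact this

end SimpleGraph

open SimpleGraph

section InducedC4

variable {V : Type u} {G : SimpleGraph V} {C : Set V}

theorem IsInducedC4.exists_adj_adj (hC : IsInducedC4 G C) {x : V} (hx : x ∈ C) :
    ∃ y ∈ C, ∃ z ∈ C, G.Adj x y ∧ G.Adj x z ∧ y ≠ z ∧ ¬ G.Adj y z := by
  obtain ⟨w0, w1, w2, w3, rfl, -, h02, -, -, h13, -, a01, a12, a23, a30, na02, na13⟩ := hC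
  simp only [Set.mem_insert_iff, Set.mem_singleton_iff] at hx
  rcases hx with h | h | h | h <;> subst x
  · exact ⟨w1, by simp, w3, by simp, a01, a30.symm, h13, na13⟩
  · exact ⟨w2, by simp, w0, by simp, a12, a01.symm, h02.symm, fun h => na02 h.symm⟩
  · exact ⟨w3, by simp, w1, by simp, a23, a12.symm, h13.symm, fun h => na13 h.symm⟩
  · exact ⟨w0, by simp, w2, by simp, a30, a23.symm, h02, na02⟩

theorem IsInducedC4.dist_le_two (hC : IsInducedC4 G C) (hG : G.Connected) {x y : V}
    (hx : x ∈ C) (hy : y ∈ C) : G.dist x y ≤ 2 := by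
  obtain ⟨w0, w1, w2, w3, rfl, -, -, -, -, -, -, a01, a12, a23, a30, -, -⟩ := hC
  simp only [Set.mem_insert_iff, Set.mem_singleton_iff] at hx hy
  have := a01.symm; have := a12.symm; have := a23.symm; have := a30.symm
  rcases hx with h | h | h | h <;> rcases hy with h' | h' | h' | h' <;> subst x y <;>
    first
    | exact (dist_eq_one_iff_adj.2 (by assumption)).le.trans one_le_two
    | exact hG.dist_le_two_of_adj_of_adj (y := w1) (by assumption) (by assumption)
    | exact hG.dist_le_two_of_adj_of_adj (y := w2) (by assumption) (by assumption)

theorem IsInducedC4.finite (hC : IsInducedC4 G C) : C.Finite := by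
  obtain ⟨w0, w1, w2, w3, rfl, -⟩ := hC
  exact Set.toFinite _

theorem IsInducedC4.exists_mem_forall_ne (hC : IsInducedC4 G C) (c : Fin 2 → V) :
    ∃ r ∈ C, ∀ i, c i ≠ r := by
  obtain ⟨w0, w1, w2, w3, rfl, h01, h02, -, h12, -⟩ := hC
  by_contra! h
  obtain ⟨i0, rfl⟩ := h w0 (by simp)
  obtain ⟨i1, rfl⟩ := h w1 (by simp)
  obtain ⟨i2, rfl⟩ := h w2 (by simp)
  have : i0 = i1 ∨ i0 = i2 ∨ i1 = i2 := by omega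
  rcases this with h | h | h <;> subst h <;> contradiction

end InducedC4

section Game

variable {V : Type u} {G : SimpleGraph V} {k : ℕ}

theorem CopMoves.move_mem_closedNeighborSet (CM : CopMoves G k) (n : ℕ) (c : Fin k → V)
    (r : V) (i : Fin k) : CM.move n c r i ∈ G.closedNeighborSet (c i) :=
  CM.valid n c r i

def IsSafe (G : SimpleGraph V) (c : Fin k → V) (x : V) : Prop :=
  ∀ i, x ∉ G.closedNeighborSet (c i)

variable (CM : CopMoves G k) (RM : RobberMoves G k) (c0 : Fin k → V) (r0 : V)

theorem playFrom_succ_fst (n : ℕ) :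
    (playFrom CM RM c0 r0 (n + 1)).1 =
      CM.move n (playFrom CM RM c0 r0 n).1 (playFrom CM RM c0 r0 (n + 1)).2 :=
  rfl

theorem playFrom_succ_snd (n : ℕ) :
    (playFrom CM RM c0 r0 (n + 1)).2 =
      RM.move n (playFrom CM RM c0 r0 n).1 (playFrom CM RM c0 r0 n).2 :=
  rfl

theorem playFrom_succ_fst_ne_of_isSafe {n : ℕ}
    (h : IsSafe G (playFrom CM RM c0 r0 n).1 (playFrom CM RM c0 r0 (n + 1)).2) (i : Fin k) :
    (playFrom CM RM c0 r0 (n + 1)).1 i ≠ (playFrom CM RM c0 r0 (n + 1)).2 := fun heq =>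
  h i (by rw [← heq, playFrom_succ_fst]; exact CM.move_mem_closedNeighborSet n _ _ i)

theorem dist_le_dist_playFrom_add (hG : G.Connected) (v : V) (i : Fin k) (n : ℕ) :
    G.dist v (c0 i) ≤ G.dist v ((playFrom CM RM c0 r0 n).1 i) + n := by
  induction n with
  | zero => simp [playFrom]
  | succ n ih =>
    have := hG.dist_le_dist_add_one_of_mem_closedNeighborSet
      (CM.move_mem_closedNeighborSet n (playFrom CM RM c0 r0 n).1
        (playFrom CM RM c0 r0 (n + 1)).2 i) v
    rw [playFrom_succ_fst]
    omega

theorem exists_eq_of_capturedIn_zero (h : CapturedIn CM RM c0 r0 0) : ∃ i, c0 i = r0 := by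
  obtain ⟨n, hn, i, hi⟩ := h
  obtain rfl : n = 0 := Nat.le_zero.1 hn
  exact ⟨i, hi⟩

end Game

section Evade

variable {V : Type u} {G : SimpleGraph V} {k : ℕ} {C : Set V}

open Classical in
noncomputable def evade (G : SimpleGraph V) (k : ℕ) (C : Set V) : RobberMoves G k where
  move _ c r :=
    if IsSafe G c r then r
    else if h : ∃ x ∈ C, x ∈ G.closedNeighborSet r ∧ IsSafe G c x then h.choose else r
  valid n c r := by
    show _ ∈ G.closedNeighborSet r
    split_ifs with _ h
    · exact Set.mem_insert r _
    · exact h.choose_spec.2.1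
    · exact Set.mem_insert r _

theorem evade_move_of_isSafe {n : ℕ} {c : Fin k → V} {r : V} (h : IsSafe G c r) :
    (evade G k C).move n c r = r :=
  if_pos h

theorem evade_move_spec {n : ℕ} {c : Fin k → V} {r : V} (hr : r ∈ C)
    (h : ∃ x ∈ C, x ∈ G.closedNeighborSet r ∧ IsSafe G c x) :
    (evade G k C).move n c r ∈ C ∧ IsSafe G c ((evade G k C).move n c r) := by
  by_cases hs : IsSafe G c r
  · rw [evade_move_of_isSafe hs]
    exact ⟨hr, hs⟩
  · simp only [evade, if_neg hs, dif_pos h]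
    exact ⟨h.choose_spec.1, h.choose_spec.2.2⟩

variable (CM : CopMoves G k) (c0 : Fin k → V) (r0 : V)

theorem evade_playFrom_snd_eq {n : ℕ}
    (h : ∀ m < n, IsSafe G (playFrom CM (evade G k C) c0 r0 m).1 r0) :
    (playFrom CM (evade G k C) c0 r0 n).2 = r0 := by
  induction n with
  | zero => rfl
  | succ n ih =>
    rw [playFrom_succ_snd, ih fun m hm => h m (by omega)]
    exact evade_move_of_isSafe (h n n.lt_succ_self)

theorem not_capturedIn_evade {t : ℕ} (hr0 : r0 ∈ C) (hc0 : ∀ i, c0 i ≠ r0)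
    (hstep : ∀ n < t, (playFrom CM (evade G k C) c0 r0 n).2 ∈ C →
      (∀ i, (playFrom CM (evade G k C) c0 r0 n).1 i ≠ (playFrom CM (evade G k C) c0 r0 n).2) →
      ∃ x ∈ C, x ∈ G.closedNeighborSet (playFrom CM (evade G k C) c0 r0 n).2 ∧
        IsSafe G (playFrom CM (evade G k C) c0 r0 n).1 x) :
    ¬ CapturedIn CM (evade G k C) c0 r0 t := by
  have alive : ∀ n ≤ t, (playFrom CM (evade G k C) c0 r0 n).2 ∈ C ∧
      ∀ i, (playFrom CM (evade G k C) c0 r0 n).1 i ≠ (playFrom CM (evade G k C) c0 r0 n).2 := by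
    intro n
    induction n with
    | zero => exact fun _ => ⟨hr0, hc0⟩
    | succ n ih =>
      intro hn
      obtain ⟨hrC, hfree⟩ := ih (by omega)
      have hmove := evade_move_spec (n := n) hrC (hstep n (by omega) hrC hfree)
      rw [← playFrom_succ_snd] at hmove
      exact ⟨hmove.1, playFrom_succ_fst_ne_of_isSafe CM _ c0 r0 hmove.2⟩
  rintro ⟨n, hn, i, hi⟩
  exact (alive n hn).2 i hi

end Evade

section Trap

variable {V : Type u} {G : SimpleGraph V} {C : Set V}

theorem not_subset_closedNeighborSet (hCfin : C.Finite)
    (hN : ∀ v : V, (G.neighborSet v ∩ C).ncard ≤ 2) {x y z p : V}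
    (hx : x ∈ C) (hy : y ∈ C) (hz : z ∈ C) (hxy : x ≠ y) (hxz : x ≠ z) (hyz : y ≠ z)
    (hnadj : ¬ G.Adj y z) (hpx : p ≠ x) : ¬ {x, y, z} ⊆ G.closedNeighborSet p := by
  intro h
  have hpy : p ≠ y := by
    rintro rfl
    rcases h (by simp : z ∈ _) with h | h
    exacts [hyz h.symm, hnadj h]
  have hpz : p ≠ z := by
    rintro rfl
    rcases h (by simp : y ∈ _) with h | h
    exacts [hyz h, hnadj h.symm]
  have hsub : {x, y, z} ⊆ G.neighborSet p ∩ C := by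
    intro w hw
    have hwC : w ∈ C := by
      simp only [Set.mem_insert_iff, Set.mem_singleton_iff] at hw
      rcases hw with rfl | rfl | rfl <;> assumption
    refine ⟨(h hw).resolve_left ?_, hwC⟩
    rintro rfl
    simp only [Set.mem_insert_iff, Set.mem_singleton_iff] at hw
    rcases hw with h | h | h
    exacts [hpx h, hpy h, hpz h]
  have hcard := Set.ncard_le_ncard hsub (hCfin.inter_of_right _)
  rw [Set.ncard_eq_three.2 ⟨x, y, z, hxy, hxz, hyz, rfl⟩] at hcard
  exact absurd (hcard.trans (hN p)) (by norm_num)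

theorem dist_add_dist_le_three (hG : G.Connected) (hCfin : C.Finite)
    (hN : ∀ v : V, (G.neighborSet v ∩ C).ncard ≤ 2) {x y z p q : V}
    (hx : x ∈ C) (hy : y ∈ C) (hz : z ∈ C) (hxy : G.Adj x y) (hxz : G.Adj x z) (hyz : y ≠ z)
    (hnadj : ¬ G.Adj y z) (hpx : p ≠ x) (hqx : q ≠ x)
    (htrap : {x, y, z} ⊆ G.closedNeighborSet p ∪ G.closedNeighborSet q) :
    G.dist x p + G.dist x q ≤ 3 := by
  wlog hxp : x ∈ G.closedNeighborSet p generalizing p q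
  · have := this hqx hpx (by rwa [Set.union_comm]) ((htrap (by simp)).resolve_left hxp)
    omega
  have hp : G.dist x p ≤ 1 := by
    rw [dist_comm]
    exact dist_le_one_of_mem_closedNeighborSet hxp
  have hq : G.dist x q ≤ 2 := by
    obtain ⟨w, hw, hwp⟩ := Set.not_subset.1
      (not_subset_closedNeighborSet hCfin hN hx hy hz hxy.ne hxz.ne hyz hnadj hpx)
    have hwq := (htrap hw).resolve_left hwp
    have hxw : G.dist x w ≤ 1 := by
      simp only [Set.mem_insert_iff, Set.mem_singleton_iff] at hw
      rcases hw with rfl | rfl | rfl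
      · simp
      · exact (dist_eq_one_iff_adj.2 hxy).le
      · exact (dist_eq_one_iff_adj.2 hxz).le
    have := hG.dist_le_dist_add_one_of_mem_closedNeighborSet hwq x
    omega
  omega

end Trap

section Strategy

variable {V : Type u} {G : SimpleGraph V} {k : ℕ} {C : Set V}

theorem exists_isSafe_of_not_subset {c : Fin k → V} {r y z : V} (hr : r ∈ C) (hy : y ∈ C)
    (hz : z ∈ C) (hry : G.Adj r y) (hrz : G.Adj r z)
    (h : ¬ {r, y, z} ⊆ ⋃ i, G.closedNeighborSet (c i)) :
    ∃ x ∈ C, x ∈ G.closedNeighborSet r ∧ IsSafe G c x := by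
  obtain ⟨w, hw, hsafe⟩ := Set.not_subset.1 h
  simp only [Set.mem_iUnion, not_exists] at hsafe
  simp only [Set.mem_insert_iff, Set.mem_singleton_iff] at hw
  rcases hw with rfl | rfl | rfl
  exacts [⟨w, hr, Set.mem_insert w _, hsafe⟩, ⟨w, hy, Or.inr hry, hsafe⟩,
    ⟨w, hz, Or.inr hrz, hsafe⟩]

theorem not_capturedIn_evade_of_le_dist (hG : G.Connected) (hC : IsInducedC4 G C)
    (hN : ∀ v : V, (G.neighborSet v ∩ C).ncard ≤ 2) {u : V} (hu : u ∈ C) (CM : CopMoves G 2)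
    (c0 : Fin 2 → V) {t : ℕ} (ht : 0 < t) (hfar : ∀ i, t ≤ G.dist u (c0 i))
    (hsum : 2 * t + 2 ≤ G.dist u (c0 0) + G.dist u (c0 1)) :
    ¬ CapturedIn CM (evade G 2 C) c0 u t := by
  set P := playFrom CM (evade G 2 C) c0 u
  have hdist := dist_le_dist_playFrom_add CM (evade G 2 C) c0 u hG u
  have hstay : ∀ n < t, (P n).2 = u := fun n hn =>
    evade_playFrom_snd_eq CM c0 u fun m hm i hmem => by
      have := dist_le_one_of_mem_closedNeighborSet hmem
      have := hdist i m
      have := hfar i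
      rw [dist_comm] at *
      omega
  refine not_capturedIn_evade CM c0 u hu (fun i hi => ?_) fun n hn _ hfree => ?_
  · have := hfar i
    simp [hi] at this
    omega
  obtain ⟨y, hy, z, hz, huy, huz, hyz, hnadj⟩ := hC.exists_adj_adj hu
  rw [hstay n hn] at hfree ⊢
  refine exists_isSafe_of_not_subset hu hy hz huy huz fun htrap => ?_
  have := dist_add_dist_le_three hG hC.finite hN hu hy hz huy huz hyz hnadj (hfree 0) (hfree 1)
    fun w hw => by simpa [Fin.exists_fin_two] using htrap hw
  have := hdist 0 n
  have := hdist 1 n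
  omega

theorem exists_not_capturedIn_evade_of_add_three_le_dist (hG : G.Connected) (hC : IsInducedC4 G C)
    (hN : ∀ v : V, (G.neighborSet v ∩ C).ncard ≤ 2) {u : V} (hu : u ∈ C) (CM : CopMoves G k)
    (c0 : Fin k → V) (i0 : Fin k) {t : ℕ} (hfar : ∀ i ≠ i0, t + 3 ≤ G.dist u (c0 i)) :
    ∃ r0, ¬ CapturedIn CM (evade G k C) c0 r0 t := by
  have hfarC : ∀ i ≠ i0, c0 i ∉ C := fun i hi hiC => by
    have := hC.dist_le_two hG hu hiC
    have := hfar i hi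
    omega
  obtain ⟨y, hy, -, -, huy, -⟩ := hC.exists_adj_adj hu
  obtain ⟨r0, hr0, hr0i0⟩ : ∃ r0 ∈ C, c0 i0 ≠ r0 := by
    by_cases h : c0 i0 = u
    · exact ⟨y, hy, h ▸ huy.ne⟩
    · exact ⟨u, hu, h⟩
  refine ⟨r0, not_capturedIn_evade CM c0 r0 hr0 (fun i => ?_) fun n hn hr hfree => ?_⟩
  · by_cases hi : i = i0
    · exact hi ▸ hr0i0
    · exact fun h => hfarC i hi (h ▸ hr0)
  set P := playFrom CM (evade G k C) c0 r0
  have hout : ∀ i ≠ i0, ∀ w ∈ C, w ∉ G.closedNeighborSet ((P n).1 i) := fun i hi w hw hmem => by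
    have := hG.dist_le_dist_add_one_of_mem_closedNeighborSet hmem u
    have := hC.dist_le_two hG hu hw
    have : G.dist u (c0 i) ≤ G.dist u ((P n).1 i) + n :=
      dist_le_dist_playFrom_add CM (evade G k C) c0 r0 hG u i n
    have := hfar i hi
    omega
  obtain ⟨y, hy, z, hz, hry, hrz, hyz, hnadj⟩ := hC.exists_adj_adj hr
  refine exists_isSafe_of_not_subset hr hy hz hry hrz fun htrap => ?_
  refine not_subset_closedNeighborSet hC.finite hN hr hy hz hry.ne hrz.ne hyz hnadj (hfree i0)
    fun w hw => ?_
  obtain ⟨i, hi⟩ := Set.mem_iUnion.1 (htrap hw)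
  by_cases hii0 : i = i0
  · exact hii0 ▸ hi
  · have hwC : w ∈ C := by
      simp only [Set.mem_insert_iff, Set.mem_singleton_iff] at hw
      rcases hw with rfl | rfl | rfl <;> assumption
    exact absurd hi (hout i hii0 w hwC)

end Strategy

theorem dist_central_pair_le_general {V : Type u} (G : SimpleGraph V)
    (hconn : G.Connected)
    (C : Set V) (hC : IsInducedC4 G C)
    (hN : ∀ v : V, (G.neighborSet v ∩ C).ncard ≤ 2)
    (u : V) (hu : u ∈ C) (c1 c2 : V) (hc : IsCentralPair G c1 c2) :
    G.dist u c1 + G.dist u c2 ≤ 2 * captTime G 2 + 1 := by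
  obtain ⟨CM, hCM⟩ := hc
  by_contra! hlt
  have hT : 0 < captTime G 2 := by
    by_contra! h0
    obtain ⟨r, -, hr⟩ := hC.exists_mem_forall_ne ![c1, c2]
    obtain ⟨i, hi⟩ := exists_eq_of_capturedIn_zero CM (evade G 2 C) _ r
      (Nat.le_zero.1 h0 ▸ hCM r _)
    exact hr i hi
  by_cases hnear : captTime G 2 ≤ G.dist u c1 ∧ captTime G 2 ≤ G.dist u c2
  · refine not_capturedIn_evade_of_le_dist hconn hC hN hu CM ![c1, c2] hT ?_ ?_ (hCM u _)
    · simpa [Fin.forall_fin_two] using hnear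
    · simp only [Matrix.cons_val_zero, Matrix.cons_val_one]
      omega
  · obtain ⟨i0, hfar⟩ : ∃ i0 : Fin 2, ∀ i ≠ i0, captTime G 2 + 3 ≤ G.dist u (![c1, c2] i) := by
      rcases not_and_or.1 hnear with h | h
      · exact ⟨0, fun i hi => by fin_cases i <;> simp_all; omega⟩
      · exact ⟨1, fun i hi => by fin_cases i <;> simp_all; omega⟩
    obtain ⟨r0, hr0⟩ := exists_not_capturedIn_evade_of_add_three_le_dist hconn hC hN hu CM _ i0 hfar
    exact hr0 (hCM r0 _)

/-- Lemma 2 of the paper.  Let `G` be a finite connected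
2-cop-win graph, and `u` a vertex lying on an induced 4-cycle `C` such that
every vertex of `G` has at most two neighbours in `C`.  If `(c1, c2)` is a
central 2-tuple, then `d(u,c1) + d(u,c2) ≤ 2 capt₂(G) + 1`. -/
theorem dist_central_pair_le {V : Type u} [Fintype V] (G : SimpleGraph V)
    (hconn : G.Connected) (hwin : IsCopWin G 2)
    (C : Set V) (hC : IsInducedC4 G C)
    (hN : ∀ v : V, (G.neighborSet v ∩ C).ncard ≤ 2)
    (u : V) (hu : u ∈ C) (c1 c2 : V) (hc : IsCentralPair G c1 c2) :
    G.dist u c1 + G.dist u c2 ≤ 2 * captTime G 2 + 1 :=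
  dist_central_pair_le_general G hconn C hC hN u hu c1 c2 hc
end

section
/- Let G be a finite connected simple graph and let C be an induced cycle of length 4 in G such that for every vertex v of G, |N(v) ∩ V(C)| ≤ 2. Then no vertex of C is a corner of G; that is, for every u ∈ V(C) there is no vertex v ≠ u with N[u] ⊆ N[v]. -/
/-!
If `N[u] ⊆ N[v]` with `v ≠ u`, then `v` is adjacent to `u`, and also to both cycle neighbours
`x, y` of `u`: these are non-adjacent, so neither of them can be `v` itself. Hence `v` has
the three neighbours `u, x, y` on the cycle.
-/

open SimpleGraph

universe u

namespace SimpleGraph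

variable {V : Type u} {G : SimpleGraph V} {u v x y : V}

theorem adj_of_insert_neighborSet_subset (hvu : v ≠ u)
    (hsub : insert u (G.neighborSet u) ⊆ insert v (G.neighborSet v)) : G.Adj v u :=
  (hsub (Set.mem_insert u _)).resolve_left hvu.symm

theorem adj_of_insert_neighborSet_subset_of_not_adj
    (hsub : insert u (G.neighborSet u) ⊆ insert v (G.neighborSet v))
    (hx : x ∈ insert u (G.neighborSet u)) (hy : y ∈ insert u (G.neighborSet u))
    (hxy : x ≠ y) (hnxy : ¬ G.Adj x y) : G.Adj v x := by
  rcases hsub hx with rfl | hvx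
  · rcases hsub hy with rfl | hxy'
    · exact absurd rfl hxy
    · exact absurd hxy' hnxy
  · exact hvx

theorem two_lt_ncard_neighborSet_inter_of_insert_neighborSet_subset {C : Set V}
    (hCfin : C.Finite) (hu : u ∈ C) (hx : x ∈ C) (hy : y ∈ C)
    (hux : G.Adj u x) (huy : G.Adj u y) (hxy : x ≠ y) (hnxy : ¬ G.Adj x y)
    (hvu : v ≠ u) (hsub : insert u (G.neighborSet u) ⊆ insert v (G.neighborSet v)) :
    2 < (G.neighborSet v ∩ C).ncard := by
  have hx' : x ∈ insert u (G.neighborSet u) := Set.mem_insert_of_mem u hux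
  have hy' : y ∈ insert u (G.neighborSet u) := Set.mem_insert_of_mem u huy
  have hvx := adj_of_insert_neighborSet_subset_of_not_adj hsub hx' hy' hxy hnxy
  have hvy := adj_of_insert_neighborSet_subset_of_not_adj hsub hy' hx' hxy.symm
    (fun h ↦ hnxy h.symm)
  exact (Set.two_lt_ncard (hCfin.inter_of_right _)).2
    ⟨u, ⟨adj_of_insert_neighborSet_subset hvu hsub, hu⟩, x, ⟨hvx, hx⟩, y, ⟨hvy, hy⟩,
      hux.ne, huy.ne, hxy⟩

end SimpleGraph

namespace IsInducedC4

variable {V : Type u} {G : SimpleGraph V} {C : Set V}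

theorem finite_s6 (hC : IsInducedC4 G C) : C.Finite := by
  obtain ⟨w0, w1, w2, w3, rfl, -⟩ := hC
  exact Set.toFinite _

theorem exists_adj_adj_not_adj (hC : IsInducedC4 G C) {u : V} (hu : u ∈ C) :
    ∃ x ∈ C, ∃ y ∈ C, G.Adj u x ∧ G.Adj u y ∧ x ≠ y ∧ ¬ G.Adj x y := by
  obtain ⟨w0, w1, w2, w3, rfl, -, h02, -, -, h13, -, a01, a12, a23, a30, n02, n13⟩ := hC
  rcases hu with rfl | rfl | rfl | rfl
  · exact ⟨w1, by simp, w3, by simp, a01, a30.symm, h13, n13⟩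
  · exact ⟨w0, by simp, w2, by simp, a01.symm, a12, h02, n02⟩
  · exact ⟨w1, by simp, w3, by simp, a12.symm, a23, h13, n13⟩
  · exact ⟨w0, by simp, w2, by simp, a30, a23.symm, h02, n02⟩

end IsInducedC4

theorem no_corner_on_induced_C4_general {V : Type u} (G : SimpleGraph V)
    (C : Set V) (hC : IsInducedC4 G C)
    (hN : ∀ v : V, (G.neighborSet v ∩ C).ncard ≤ 2)
    (u : V) (hu : u ∈ C) :
    ¬ ∃ v : V, v ≠ u ∧ insert u (G.neighborSet u) ⊆ insert v (G.neighborSet v) := by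
  rintro ⟨v, hvu, hsub⟩
  obtain ⟨x, hx, y, hy, hux, huy, hxy, hnxy⟩ := hC.exists_adj_adj_not_adj hu
  have h3 := two_lt_ncard_neighborSet_inter_of_insert_neighborSet_subset hC.finite_s6 hu hx hy
    hux huy hxy hnxy hvu hsub
  exact absurd (hN v) h3.not_ge

/-- If `C` is an induced 4-cycle in a finite connected graph
`G` such that every vertex of `G` has at most two neighbours in `C`, then no
vertex of `C` is a corner: for `u ∈ C` there is no `v ≠ u` with
`N[u] ⊆ N[v]`. -/
theorem no_corner_on_induced_C4 {V : Type u} [Fintype V] (G : SimpleGraph V)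
    (hconn : G.Connected) (C : Set V) (hC : IsInducedC4 G C)
    (hN : ∀ v : V, (G.neighborSet v ∩ C).ncard ≤ 2)
    (u : V) (hu : u ∈ C) :
    ¬ ∃ v : V, v ≠ u ∧ insert u (G.neighborSet u) ⊆ insert v (G.neighborSet v) :=
  no_corner_on_induced_C4_general G C hC hN u hu
end
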